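/- Under the contamination model with constant L ∈ [0,1], Var(ε) > 0, Var(μ) > 0, the squared population correlation between μ̂ = μ + L·ε and Y = μ + ε, given by Corr(μ̂,Y)² = (Var(μ) + L·Var(ε))²/((Var(μ)+L²·Var(ε))(Var(μ)+Var(ε))), is strictly increasing in L on [0,1]. -/
import Mathlib

/-- With `a := Var(μ) > 0` and `b := Var(ε) > 0`, the squared population correlation between
`μ̂ = μ + L·ε` and `Y = μ + ε`, namely `g(L) = (a + L·b)² / ((a + L²·b)·(a + b))`,
is strictly increasing in `L` on `[0, 1]`. -/
theorem stmt10 (a b : ℝ) (ha : 0 < a) (hb : 0 < b) (g : ℝ → ℝ)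
    (hg : g = fun L => (a + L * b) ^ 2 / ((a + L ^ 2 * b) * (a + b))) :
    StrictMonoOn g (Set.Icc (0 : ℝ) 1) := by
  subst hg
  intro x hx y hy hxy
  simp only [Set.mem_Icc] at hx hy
  have hdx : 0 < (a + x ^ 2 * b) * (a + b) := by positivity
  have hdy : 0 < (a + y ^ 2 * b) * (a + b) := by positivity
  rw [div_lt_div_iff₀ hdx hdy]
  have hx1 : x < 1 := lt_of_lt_of_le hxy hy.2
  have h1 : 0 < a * (2 - x - y) := by nlinarith
  have h2 : 0 ≤ b * (x * (1 - y) + y * (1 - x)) := by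
    have := mul_nonneg hx.1 (by linarith : (0:ℝ) ≤ 1 - y)
    have := mul_nonneg hy.1 (by linarith : (0:ℝ) ≤ 1 - x)
    nlinarith
  have key : 0 < a * b * (y - x) * (a * (2 - x - y) + b * (x * (1 - y) + y * (1 - x))) * (a + b) :=
    mul_pos (mul_pos (mul_pos (mul_pos ha hb) (sub_pos.2 hxy)) (by linarith)) (by linarith)
  nlinarith [key]
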